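/- Let d ≥ 5 be an integer and let G, H ∈ ℂ[t₀,t₁] be homogeneous of degree d−1, with coefficients G_{i,j} and H_{i,j}. Set A = t₀⁴·V_{d−4}. Then A + span_ℂ{t₀G, t₁G, t₀H, t₁H} = V_d if and only if the 4×4 complex matrix with rows (G_{2,d−3}, G_{1,d−2}, G_{0,d−1}, 0), (G_{3,d−4}, G_{2,d−3}, G_{1,d−2}, G_{0,d−1}), (H_{2,d−3}, H_{1,d−2}, H_{0,d−1}, 0), (H_{3,d−4}, H_{2,d−3}, H_{1,d−2}, H_{0,d−1}) has rank 4. -/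

import Mathlib

open MvPolynomial

noncomputable section

/-- `V n` is the space of homogeneous polynomials of degree `n` in `ℂ[t₀,t₁]`. -/
abbrev V (n : ℕ) : Submodule ℂ (MvPolynomial (Fin 2) ℂ) :=
  MvPolynomial.homogeneousSubmodule (Fin 2) ℂ n

/-- `coeff2 i j F` is the coefficient of the monomial `t₀^i t₁^j` in `F`. -/
def coeff2 (i j : ℕ) (F : MvPolynomial (Fin 2) ℂ) : ℂ :=
  MvPolynomial.coeff (Finsupp.single 0 i + Finsupp.single 1 j) F

namespace Statement14Aux

/-- The index monomial for column `j`. -/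
def idx (d : ℕ) (j : Fin 4) : Fin 2 →₀ ℕ :=
  Finsupp.single 0 (3 - (j : ℕ)) + Finsupp.single 1 (d - 3 + (j : ℕ))

/-- The linear map recording the coefficients of the last four monomials. -/
def phiMap (d : ℕ) : MvPolynomial (Fin 2) ℂ →ₗ[ℂ] (Fin 4 → ℂ) :=
  LinearMap.pi fun j => MvPolynomial.lcoeff (σ := Fin 2) (R := ℂ) (idx d j)

lemma phiMap_apply (d : ℕ) (p : MvPolynomial (Fin 2) ℂ) (j : Fin 4) :
    phiMap d p j = MvPolynomial.coeff (idx d j) p := rfl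

lemma degree_fin2 (m : Fin 2 →₀ ℕ) : m.degree = m 0 + m 1 := by
  rw [Finsupp.degree_apply, Finset.sum_subset (Finset.subset_univ _)
    (fun x _ hx => Finsupp.notMem_support_iff.mp hx)]
  simp [Fin.sum_univ_two]

lemma weight_fin2 (m : Fin 2 →₀ ℕ) : Finsupp.weight 1 m = m 0 + m 1 := by
  show Finsupp.weight (fun _ => 1) m = _
  rw [← Finsupp.degree_eq_weight_one]
  exact degree_fin2 m

lemma idx_apply0 (d : ℕ) (j : Fin 4) : idx d j 0 = 3 - (j : ℕ) := by
  simp [idx, Finsupp.single_apply]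

lemma idx_apply1 (d : ℕ) (j : Fin 4) : idx d j 1 = d - 3 + (j : ℕ) := by
  simp [idx, Finsupp.single_apply]

lemma idx_inj (d : ℕ) (j k : Fin 4) (h : idx d j = idx d k) : j = k := by
  have h0 : idx d j 0 = idx d k 0 := by rw [h]
  rw [idx_apply0, idx_apply0] at h0
  have hj := j.isLt
  have hk := k.isLt
  exact Fin.ext (by omega)

lemma ker_mem (d : ℕ) (hd : 5 ≤ d) (q : MvPolynomial (Fin 2) ℂ)
    (hq : q ∈ V d) (h0 : phiMap d q = 0) :
    q ∈ (V (d - 4)).map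
      (LinearMap.mulLeft ℂ ((X 0 : MvPolynomial (Fin 2) ℂ) ^ 4)) := by
  have hq' : MvPolynomial.IsHomogeneous q d := hq
  refine Submodule.mem_map.mpr ⟨q.divMonomial (Finsupp.single 0 4), ?_, ?_⟩
  · show MvPolynomial.IsHomogeneous _ (d - 4)
    intro m hm
    rw [MvPolynomial.coeff_divMonomial] at hm
    have h1 : Finsupp.weight 1 (Finsupp.single 0 4 + m) = d := hq' hm
    rw [weight_fin2] at h1
    rw [weight_fin2]
    simp only [Finsupp.add_apply, Finsupp.single_apply] at h1
    simp at h1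
    omega
  · rw [LinearMap.mulLeft_apply, MvPolynomial.X_pow_eq_monomial]
    ext m
    rw [MvPolynomial.coeff_monomial_mul']
    split_ifs with h
    · rw [MvPolynomial.coeff_divMonomial, one_mul]
      have h0' : (4 : ℕ) ≤ m 0 := by
        rw [Finsupp.le_def] at h
        simpa using h 0
      congr 1
      ext a
      fin_cases a <;>
        simp [Finsupp.single_apply, Finsupp.tsub_apply] <;> omega
    · have hm0 : m 0 ≤ 3 := by
        by_contra hc
        apply h
        rw [Finsupp.le_def]
        intro a
        fin_cases a <;> simp [Finsupp.single_apply] <;> omega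
      by_cases hdeg : m.degree = d
      · have hmd : m 0 + m 1 = d := by rw [← degree_fin2]; exact hdeg
        have hj : (3 - m 0) < 4 := by omega
        have hidx : idx d ⟨3 - m 0, hj⟩ = m := by
          ext a
          fin_cases a
          · show idx d ⟨3 - m 0, hj⟩ 0 = m 0
            rw [idx_apply0]; simp; omega
          · show idx d ⟨3 - m 0, hj⟩ 1 = m 1
            rw [idx_apply1]; simp; omega
        have hz : MvPolynomial.coeff (idx d ⟨3 - m 0, hj⟩) q = 0 := by
          have := congrFun h0 ⟨3 - m 0, hj⟩
          simpa [phiMap_apply] using this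
        rw [← hidx, hz]
      · rw [hq'.coeff_eq_zero hdeg]

lemma sub_le_ker (d : ℕ) :
    (V (d - 4)).map (LinearMap.mulLeft ℂ ((X 0 : MvPolynomial (Fin 2) ℂ) ^ 4))
      ≤ LinearMap.ker (phiMap d) := by
  intro x hx
  obtain ⟨r, -, rfl⟩ := Submodule.mem_map.mp hx
  rw [LinearMap.mem_ker]
  funext j
  rw [phiMap_apply, LinearMap.mulLeft_apply, MvPolynomial.X_pow_eq_monomial,
    MvPolynomial.coeff_monomial_mul', if_neg, Pi.zero_apply]
  intro hle
  rw [Finsupp.le_def] at hle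
  have := hle 0
  have hj := j.isLt
  rw [idx_apply0] at this
  simp [Finsupp.single_apply] at this
  omega

lemma A_le_V (d : ℕ) (hd : 5 ≤ d) :
    (V (d - 4)).map (LinearMap.mulLeft ℂ ((X 0 : MvPolynomial (Fin 2) ℂ) ^ 4)) ≤ V d := by
  intro x hx
  obtain ⟨r, hr, rfl⟩ := Submodule.mem_map.mp hx
  have hr' : MvPolynomial.IsHomogeneous r (d - 4) := hr
  have hh := (MvPolynomial.isHomogeneous_X_pow (R := ℂ) (0 : Fin 2) 4).mul hr'
  rw [show 4 + (d - 4) = d by omega] at hh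
  show MvPolynomial.IsHomogeneous _ d
  simpa only [LinearMap.mulLeft_apply] using hh

lemma mul_X_mem_V (d : ℕ) (hd : 5 ≤ d) (i : Fin 2) (G : MvPolynomial (Fin 2) ℂ)
    (hG : G ∈ V (d - 1)) : X i * G ∈ V d := by
  have hG' : MvPolynomial.IsHomogeneous G (d - 1) := hG
  have hh := (MvPolynomial.isHomogeneous_X ℂ i).mul hG'
  rw [show 1 + (d - 1) = d by omega] at hh
  exact hh

lemma phi_surj (d : ℕ) (hd : 5 ≤ d) : (V d).map (phiMap d) = ⊤ := by
  rw [eq_top_iff, ← (Pi.basisFun ℂ (Fin 4)).span_eq, Submodule.span_le]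
  rintro _ ⟨j, rfl⟩
  rw [SetLike.mem_coe]
  refine Submodule.mem_map.mpr ⟨MvPolynomial.monomial (idx d j) 1, ?_, ?_⟩
  · show MvPolynomial.IsHomogeneous _ d
    apply MvPolynomial.isHomogeneous_monomial
    rw [degree_fin2, idx_apply0, idx_apply1]
    have := j.isLt
    omega
  · funext k
    rw [phiMap_apply, MvPolynomial.coeff_monomial]
    by_cases h : k = j
    · subst h
      simp [Pi.basisFun_apply, Pi.single_apply]
    · rw [if_neg (fun he => h ((idx_inj d j k he).symm))]
      simp [Pi.basisFun_apply, Pi.single_apply, h]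

lemma rank_eq_four_iff (M : Matrix (Fin 4) (Fin 4) ℂ) :
    M.rank = 4 ↔ Submodule.span ℂ (Set.range M) = ⊤ := by
  rw [Matrix.rank_eq_finrank_span_row, Matrix.row]
  constructor
  · intro h
    apply Submodule.eq_top_of_finrank_eq
    rw [h, Module.finrank_fin_fun]
  · intro h
    rw [h, finrank_top, Module.finrank_fin_fun]

lemma range_vec4 {α : Type*} (a b c e : α) :
    Set.range ![a, b, c, e] = {a, b, c, e} := by
  ext v
  constructor
  · rintro ⟨i, rfl⟩
    fin_cases i <;> simp
  · rintro (rfl | rfl | rfl | rfl)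
    · exact ⟨0, rfl⟩
    · exact ⟨1, rfl⟩
    · exact ⟨2, rfl⟩
    · exact ⟨3, rfl⟩

lemma coeff2_X0_mul (a b : ℕ) (G : MvPolynomial (Fin 2) ℂ) :
    coeff2 (a + 1) b (X 0 * G) = coeff2 a b G := by
  unfold coeff2
  rw [show (Finsupp.single (0 : Fin 2) (a + 1) + Finsupp.single 1 b)
      = Finsupp.single 0 1 + (Finsupp.single 0 a + Finsupp.single 1 b) by
    rw [← add_assoc, ← Finsupp.single_add, add_comm 1 a]]
  exact MvPolynomial.coeff_X_mul _ _ G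

lemma coeff2_X1_mul (a b : ℕ) (G : MvPolynomial (Fin 2) ℂ) :
    coeff2 a (b + 1) (X 1 * G) = coeff2 a b G := by
  unfold coeff2
  rw [show (Finsupp.single (0 : Fin 2) a + Finsupp.single 1 (b + 1))
      = Finsupp.single 1 1 + (Finsupp.single 0 a + Finsupp.single 1 b) by
    rw [← add_assoc, add_comm (Finsupp.single (1 : Fin 2) 1), add_assoc,
      ← Finsupp.single_add, add_comm 1 b]]
  exact MvPolynomial.coeff_X_mul _ _ G

lemma coeff2_zero_X0 (b : ℕ) (G : MvPolynomial (Fin 2) ℂ) :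
    coeff2 0 b (X 0 * G) = 0 := by
  unfold coeff2
  rw [Finsupp.single_zero, zero_add, MvPolynomial.coeff_X_mul', if_neg]
  simp [Finsupp.single_apply]

lemma row_X0 (d : ℕ) (hd : 5 ≤ d) (G : MvPolynomial (Fin 2) ℂ) :
    phiMap d (X 0 * G)
      = ![coeff2 2 (d - 3) G, coeff2 1 (d - 2) G, coeff2 0 (d - 1) G, 0] := by
  funext j
  fin_cases j
  · show coeff2 3 (d - 3) (X 0 * G) = coeff2 2 (d - 3) G
    exact coeff2_X0_mul 2 (d - 3) G
  · show coeff2 2 (d - 3 + 1) (X 0 * G) = coeff2 1 (d - 2) G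
    rw [show d - 3 + 1 = d - 2 by omega]
    exact coeff2_X0_mul 1 (d - 2) G
  · show coeff2 1 (d - 3 + 2) (X 0 * G) = coeff2 0 (d - 1) G
    rw [show d - 3 + 2 = d - 1 by omega]
    exact coeff2_X0_mul 0 (d - 1) G
  · show coeff2 0 (d - 3 + 3) (X 0 * G) = 0
    exact coeff2_zero_X0 _ G

lemma row_X1 (d : ℕ) (hd : 5 ≤ d) (G : MvPolynomial (Fin 2) ℂ) :
    phiMap d (X 1 * G)
      = ![coeff2 3 (d - 4) G, coeff2 2 (d - 3) G, coeff2 1 (d - 2) G, coeff2 0 (d - 1) G] := by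
  funext j
  fin_cases j
  · show coeff2 3 (d - 3) (X 1 * G) = coeff2 3 (d - 4) G
    rw [show d - 3 = (d - 4) + 1 by omega]
    exact coeff2_X1_mul 3 (d - 4) G
  · show coeff2 2 (d - 3 + 1) (X 1 * G) = coeff2 2 (d - 3) G
    exact coeff2_X1_mul 2 (d - 3) G
  · show coeff2 1 (d - 3 + 2) (X 1 * G) = coeff2 1 (d - 2) G
    rw [show d - 3 + 2 = (d - 2) + 1 by omega]
    exact coeff2_X1_mul 1 (d - 2) G
  · show coeff2 0 (d - 3 + 3) (X 1 * G) = coeff2 0 (d - 1) G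
    rw [show d - 3 + 3 = (d - 1) + 1 by omega]
    exact coeff2_X1_mul 0 (d - 1) G

end Statement14Aux

open Statement14Aux in
/-- Criterion of Case 2-2 of Proposition 4.1: with `A = t₀⁴·V_{d-4}`, we have
`A + <t₀G, t₁G, t₀H, t₁H> = V_d` iff the matrix `M_Y` has rank 4. -/
theorem statement14 (d : ℕ) (hd : 5 ≤ d)
    (G H : MvPolynomial (Fin 2) ℂ)
    (hG : G ∈ V (d - 1)) (hH : H ∈ V (d - 1))
    (A : Submodule ℂ (MvPolynomial (Fin 2) ℂ))
    (hA : A = (V (d - 4)).map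
        (LinearMap.mulLeft ℂ ((X 0 : MvPolynomial (Fin 2) ℂ) ^ 4))) :
    (A ⊔ Submodule.span ℂ {X 0 * G, X 1 * G, X 0 * H, X 1 * H} = V d)
      ↔ Matrix.rank
          !![coeff2 2 (d - 3) G, coeff2 1 (d - 2) G, coeff2 0 (d - 1) G, 0;
             coeff2 3 (d - 4) G, coeff2 2 (d - 3) G, coeff2 1 (d - 2) G, coeff2 0 (d - 1) G;
             coeff2 2 (d - 3) H, coeff2 1 (d - 2) H, coeff2 0 (d - 1) H, 0;
             coeff2 3 (d - 4) H, coeff2 2 (d - 3) H, coeff2 1 (d - 2) H, coeff2 0 (d - 1) H] = 4 := by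
  subst hA
  set A := (V (d - 4)).map (LinearMap.mulLeft ℂ ((X 0 : MvPolynomial (Fin 2) ℂ) ^ 4)) with hA
  set S : Submodule ℂ (MvPolynomial (Fin 2) ℂ) :=
    Submodule.span ℂ {X 0 * G, X 1 * G, X 0 * H, X 1 * H} with hS
  have hSV : S ≤ V d := by
    rw [hS, Submodule.span_le]
    rintro p hp
    simp only [Set.mem_insert_iff, Set.mem_singleton_iff] at hp
    rcases hp with rfl | rfl | rfl | rfl
    · exact mul_X_mem_V d hd 0 G hG
    · exact mul_X_mem_V d hd 1 G hG
    · exact mul_X_mem_V d hd 0 H hH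
    · exact mul_X_mem_V d hd 1 H hH
  have hM : !![coeff2 2 (d - 3) G, coeff2 1 (d - 2) G, coeff2 0 (d - 1) G, 0;
             coeff2 3 (d - 4) G, coeff2 2 (d - 3) G, coeff2 1 (d - 2) G, coeff2 0 (d - 1) G;
             coeff2 2 (d - 3) H, coeff2 1 (d - 2) H, coeff2 0 (d - 1) H, 0;
             coeff2 3 (d - 4) H, coeff2 2 (d - 3) H, coeff2 1 (d - 2) H, coeff2 0 (d - 1) H]
      = Matrix.of ![phiMap d (X 0 * G), phiMap d (X 1 * G),
          phiMap d (X 0 * H), phiMap d (X 1 * H)] := by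
    rw [row_X0 d hd G, row_X1 d hd G, row_X0 d hd H, row_X1 d hd H]
  rw [hM, rank_eq_four_iff]
  have hrange : Set.range (Matrix.of ![phiMap d (X 0 * G), phiMap d (X 1 * G),
      phiMap d (X 0 * H), phiMap d (X 1 * H)])
      = phiMap d '' {X 0 * G, X 1 * G, X 0 * H, X 1 * H} := by
    rw [show (Set.range (Matrix.of ![phiMap d (X 0 * G), phiMap d (X 1 * G),
      phiMap d (X 0 * H), phiMap d (X 1 * H)]) : Set (Fin 4 → ℂ))
      = Set.range ![phiMap d (X 0 * G), phiMap d (X 1 * G),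
        phiMap d (X 0 * H), phiMap d (X 1 * H)] from rfl, range_vec4]
    simp [Set.image_insert_eq]
  rw [hrange, ← Submodule.map_span, ← hS]
  constructor
  · intro h
    have h1 := congrArg (Submodule.map (phiMap d)) h
    rw [Submodule.map_sup, phi_surj d hd] at h1
    rw [← h1]
    have h2 : Submodule.map (phiMap d) A = ⊥ := by
      rw [Submodule.eq_bot_iff]
      intro x hx
      obtain ⟨p, hp, rfl⟩ := Submodule.mem_map.mp hx
      exact LinearMap.mem_ker.mp (sub_le_ker d hp)
    rw [h2, bot_sup_eq]
  · intro h
    apply le_antisymm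
    · exact sup_le (A_le_V d hd) hSV
    · intro p hp
      have hmem : phiMap d p ∈ Submodule.map (phiMap d) S := by rw [h]; trivial
      obtain ⟨s, hs, hsp⟩ := hmem
      have hps : p - s ∈ A := by
        apply ker_mem d hd _ (Submodule.sub_mem _ hp (hSV hs))
        rw [map_sub, hsp, sub_self]
      have hpeq : p = (p - s) + s := by ring
      rw [hpeq]
      exact Submodule.add_mem _ (Submodule.mem_sup_left hps) (Submodule.mem_sup_right hs)
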